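/- Fix a positive integer l, and for i ∈ {0,1,…,l−1} define g(i) = 2^{i+1} · Σ_{j = 2^{l+1} − 2^{l−i−1}}^{2^{l+1} − 1} 1/j. Then g is strictly decreasing in i. -/

import Mathlib

/-!
With `N = 2^(l+1)` and `m = 2^(l-i-2)`, the sum in `g l i` runs over the last `2m` integers below
`N` and the sum in `g l (i+1)` over the last `m`. The former splits into the latter plus a block
of `m` smaller integers whose reciprocals are termwise larger, so it exceeds twice the latter,
which compensates exactly for the extra factor `2` in front of `g l (i+1)`.
-/

open Finset

/-- g(i) = 2^{i+1} · Σ_{j = 2^{l+1} - 2^{l-i-1}}^{2^{l+1} - 1} 1/j -/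
noncomputable def g (l i : ℕ) : ℝ :=
  (2 : ℝ) ^ (i + 1) *
    ∑ j ∈ Finset.Icc ((2 : ℕ) ^ (l + 1) - 2 ^ (l - i - 1)) (2 ^ (l + 1) - 1), (1 : ℝ) / j

theorem sum_Ico_one_div_lt_of_lt {a b m : ℕ} (ha : 0 < a) (hab : a < b) (hm : 0 < m) :
    ∑ j ∈ Ico b (b + m), (1 : ℝ) / j < ∑ j ∈ Ico a (a + m), (1 : ℝ) / j := by
  simp only [sum_Ico_eq_sum_range, Nat.add_sub_cancel_left]
  refine sum_lt_sum_of_nonempty (nonempty_range_iff.mpr hm.ne') fun k _ => ?_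
  apply one_div_lt_one_div_of_lt <;> norm_cast <;> omega

theorem two_mul_sum_Ico_one_div_lt {N m : ℕ} (hm : 0 < m) (hmN : 2 * m < N) :
    2 * ∑ j ∈ Ico (N - m) N, (1 : ℝ) / j < ∑ j ∈ Ico (N - 2 * m) N, (1 : ℝ) / j := by
  have hupper :
      ∑ j ∈ Ico (N - m) N, (1 : ℝ) / j <
        ∑ j ∈ Ico (N - 2 * m) (N - m), (1 : ℝ) / j := by
    have h₁ : N - m = N - 2 * m + m := by omega
    have h₂ : N = N - m + m := by omega
    have hlt := sum_Ico_one_div_lt_of_lt (a := N - 2 * m) (b := N - m) (by omega) (by omega) hm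
    rwa [← h₁, ← h₂] at hlt
  rw [← sum_Ico_consecutive (fun j : ℕ => (1 : ℝ) / j) (by omega : N - 2 * m ≤ N - m)
    (by omega : N - m ≤ N)]
  linarith

theorem g_eq_sum_Ico (l i : ℕ) :
    g l i = (2 : ℝ) ^ (i + 1) *
      ∑ j ∈ Ico ((2 : ℕ) ^ (l + 1) - 2 ^ (l - i - 1)) (2 ^ (l + 1)), (1 : ℝ) / j := by
  rw [g, ← Ico_add_one_right_eq_Icc, Nat.sub_add_cancel Nat.one_le_two_pow]

theorem g_strictAnti_general (l : ℕ) :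
    ∀ i : ℕ, i + 1 ≤ l - 1 → g l (i + 1) < g l i := by
  intro i hi
  set m := 2 ^ (l - i - 2)
  have hsucc : 2 ^ (l - i - 1) = 2 * m := by rw [← pow_succ']; congr 1; omega
  have hm : 0 < m := by positivity
  have hmN : 2 * m < 2 ^ (l + 1) := by
    rw [← hsucc]; exact Nat.pow_lt_pow_right (by norm_num) (by omega)
  rw [g_eq_sum_Ico, g_eq_sum_Ico, hsucc, show l - (i + 1) - 1 = l - i - 2 by omega, pow_succ,
    mul_assoc]
  exact mul_lt_mul_of_pos_left (two_mul_sum_Ico_one_div_lt hm hmN) (by positivity)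

theorem g_strictAnti (l : ℕ) (hl : 1 ≤ l) :
    ∀ i : ℕ, i + 1 ≤ l - 1 → g l (i + 1) < g l i :=
  g_strictAnti_general l
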